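/- arXiv:2411.02721 — 3 statements merged into one kernel-verified Lean document; each statement's English description precedes it below -/
import Mathlib

section
/- The parametric radial probability function e is jointly measurable: the map (c, v, x) ↦ e_c(x, v) from 𝒞 × S^{m−1} × ℝ^n to [0, ∞] is measurable with respect to the product of the Borel σ-algebras on 𝒞, S^{m−1} and ℝ^n. -/
open MeasureTheory Real Set
open scoped RealInnerProductSpace ENNReal

noncomputable section

/-- The density of the chi distribution with `m` degrees of freedom. -/
def chiPDF (m : ℕ) (r : ℝ) : ℝ :=
  (2 ^ (1 - (m : ℝ) / 2) / Real.Gamma ((m : ℝ) / 2)) * r ^ (m - 1) * Real.exp (-r ^ 2 / 2)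

/-- Matrix applied to a Euclidean vector. -/
def mApp {m : ℕ} (A : Matrix (Fin m) (Fin m) ℝ) (v : EuclideanSpace ℝ (Fin m)) :
    EuclideanSpace ℝ (Fin m) :=
  Matrix.toEuclideanLin A v

/-- The set `{r ≥ 0 : g(x, r·𝔏(c)v + 𝔷(c)) ≤ 0}`. -/
def radialSet {n m p : ℕ} (g : EuclideanSpace ℝ (Fin n) → EuclideanSpace ℝ (Fin m) → ℝ)
    (z : EuclideanSpace ℝ (Fin p) → EuclideanSpace ℝ (Fin m))
    (L : EuclideanSpace ℝ (Fin p) → Matrix (Fin m) (Fin m) ℝ)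
    (c : EuclideanSpace ℝ (Fin p)) (x : EuclideanSpace ℝ (Fin n))
    (v : EuclideanSpace ℝ (Fin m)) : Set ℝ :=
  {r : ℝ | 0 ≤ r ∧ g x (r • mApp (L c) v + z c) ≤ 0}

/-- The parametric radial probability function `e_c(x, v)`. -/
def radialE {n m p : ℕ} (g : EuclideanSpace ℝ (Fin n) → EuclideanSpace ℝ (Fin m) → ℝ)
    (z : EuclideanSpace ℝ (Fin p) → EuclideanSpace ℝ (Fin m))
    (L : EuclideanSpace ℝ (Fin p) → Matrix (Fin m) (Fin m) ℝ)
    (c : EuclideanSpace ℝ (Fin p)) (x : EuclideanSpace ℝ (Fin n))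
    (v : EuclideanSpace ℝ (Fin m)) : ℝ :=
  ∫ r in radialSet g z L c x v, chiPDF m r
/-!
The set of pairs `((c, v, x), r)` with `r ≥ 0` and `g(x, r·𝔏(c)v + 𝔷(c)) ≤ 0` is a measurable
subset of `(𝒞 × S^{m-1} × ℝⁿ) × ℝ`, being cut out by a continuous function composed with a
measurable one, and `e_c(x, v)` is the integral of the chi density over its section at `(c, v, x)`.
Such section integrals depend measurably on the base point, by the measurability part of Fubini.
-/

theorem measurable_setIntegral_prodMk_left {α β E : Type*} [MeasurableSpace α]
    [MeasurableSpace β] [NormedAddCommGroup E] [NormedSpace ℝ E] (μ : Measure β) [SFinite μ]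
    {s : Set (α × β)} (hs : MeasurableSet s) {f : β → E} (hf : StronglyMeasurable f) :
    StronglyMeasurable fun a => ∫ b in Prod.mk a ⁻¹' s, f b ∂μ := by
  have hsection (a : α) :
      ∫ b in Prod.mk a ⁻¹' s, f b ∂μ = ∫ b, s.indicator (fun ab => f ab.2) (a, b) ∂μ := by
    rw [← integral_indicator (measurable_prodMk_left hs)]
    rfl
  simp_rw [hsection]
  exact ((hf.comp_measurable measurable_snd).indicator hs).integral_prod_right'

theorem Measurable.mApp {α : Type*} [MeasurableSpace α] {m : ℕ}
    {A : α → Matrix (Fin m) (Fin m) ℝ} {v : α → EuclideanSpace ℝ (Fin m)}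
    (hA : ∀ i j, Measurable fun a => A a i j) (hv : Measurable v) :
    Measurable fun a => mApp (A a) (v a) := by
  have hv_coord (j : Fin m) : Measurable fun a => v a j :=
    (measurable_pi_apply j).comp ((MeasurableEquiv.toLp 2 (Fin m → ℝ)).symm.measurable.comp hv)
  change Measurable fun a => WithLp.toLp 2 ((A a).mulVec (v a).ofLp)
  refine (MeasurableEquiv.toLp 2 (Fin m → ℝ)).measurable.comp <| measurable_pi_lambda _ fun i => ?_
  simp only [Matrix.mulVec, dotProduct]
  exact Finset.measurable_sum _ fun j _ => (hA i j).mul (hv_coord j)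

theorem continuous_chiPDF (m : ℕ) : Continuous (chiPDF m) := by
  unfold chiPDF
  fun_prop

theorem radialE_measurable_general
    {n m p : ℕ}
    (𝒞 : Set (EuclideanSpace ℝ (Fin p)))
    (z : EuclideanSpace ℝ (Fin p) → EuclideanSpace ℝ (Fin m))
    (L : EuclideanSpace ℝ (Fin p) → Matrix (Fin m) (Fin m) ℝ)
    (hz : Measurable fun c : 𝒞 => z c)
    (hL : ∀ i j, Measurable fun c : 𝒞 => L c i j)
    (g : EuclideanSpace ℝ (Fin n) → EuclideanSpace ℝ (Fin m) → ℝ)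
    (hg : Continuous (Function.uncurry g)) :
    Measurable fun q : 𝒞 × Metric.sphere (0 : EuclideanSpace ℝ (Fin m)) 1 ×
        EuclideanSpace ℝ (Fin n) =>
      radialE g z L (↑q.1) q.2.2 (↑q.2.1) := by
  let Q := 𝒞 × Metric.sphere (0 : EuclideanSpace ℝ (Fin m)) 1 × EuclideanSpace ℝ (Fin n)
  have hdir : Measurable fun q : Q => mApp (L q.1) q.2.1 :=
    .mApp (fun i j => (hL i j).comp measurable_fst) (measurable_subtype_coe.comp measurable_snd.fst)
  have hpoint : Measurable fun qr : Q × ℝ => qr.2 • mApp (L qr.1.1) qr.1.2.1 + z qr.1.1 :=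
    (measurable_snd.smul (hdir.comp measurable_fst)).add (hz.comp measurable_fst.fst)
  -- the section of this set at `q` is, by definition, `radialSet g z L q.1 q.2.2 q.2.1`
  have hgraph : MeasurableSet
      {qr : Q × ℝ | 0 ≤ qr.2 ∧ g qr.1.2.2 (qr.2 • mApp (L qr.1.1) qr.1.2.1 + z qr.1.1) ≤ 0} :=
    (measurable_snd measurableSet_Ici).inter <| measurableSet_le
      (hg.measurable.comp (measurable_fst.snd.snd.prodMk hpoint)) measurable_const
  exact (measurable_setIntegral_prodMk_left volume hgraph
    (continuous_chiPDF m).stronglyMeasurable).measurable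

/-- the parametric radial probability function `e` is jointly
(Borel) measurable in `(c, v, x) ∈ 𝒞 × S^{m-1} × ℝ^n`. -/
theorem radialE_measurable
    {n m p : ℕ} (hn : 0 < n) (hm : 0 < m) (hp : 0 < p)
    (𝒞 : Set (EuclideanSpace ℝ (Fin p))) (h𝒞 : MeasurableSet 𝒞)
    (z : EuclideanSpace ℝ (Fin p) → EuclideanSpace ℝ (Fin m))
    (L : EuclideanSpace ℝ (Fin p) → Matrix (Fin m) (Fin m) ℝ)
    (hz : Measurable fun c : 𝒞 => z c)
    (hL : ∀ i j, Measurable fun c : 𝒞 => L c i j)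
    (g : EuclideanSpace ℝ (Fin n) → EuclideanSpace ℝ (Fin m) → ℝ)
    (hg : Continuous (Function.uncurry g)) :
    Measurable fun q : 𝒞 × Metric.sphere (0 : EuclideanSpace ℝ (Fin m)) 1 ×
        EuclideanSpace ℝ (Fin n) =>
      radialE g z L (↑q.1) q.2.2 (↑q.2.1) :=
  radialE_measurable_general 𝒞 z L hz hL g hg

end
end

section
/- If x̄ is a 𝔷-uniform Slater point, then for every fixed (c, v) ∈ 𝒞 × S^{m−1} the function x ↦ e_c(x, v) is continuous at x̄; that is, for every sequence x_k → x̄ one has e_c(x_k, v) → e_c(x̄, v). -/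
/-!
Fix `c` and `v` and put `φ x r = g x (r • 𝔏(c) v + 𝔷(c))`. Then `e_c(x, v)` is the integral of
the chi density over `{r ≥ 0 | φ x r ≤ 0}`. For each `r ≥ 0` with `φ x̄ r ≠ 0`, continuity of `φ`
makes `r` belong to this set for all `x` near `x̄` or for none, so the indicators converge
pointwise off `{r ≥ 0 | φ x̄ r = 0}`. Since `r ↦ φ x̄ r` is convex and negative at `0` (Slater),
that set has at most one point, and dominated convergence concludes.
-/

open MeasureTheory Real Set
open scoped RealInnerProductSpace ENNReal

noncomputable section

open Filter Topology Function

theorem ConvexOn.subsingleton_setOf_eq_of_lt {f : ℝ → ℝ} {a y : ℝ}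
    (hf : ConvexOn ℝ (Ici a) f) (ha : f a < y) : {r | a ≤ r ∧ f r = y}.Subsingleton := by
  suffices ∀ r₁ r₂, a ≤ r₁ → f r₁ = y → r₁ < r₂ → f r₂ ≠ y by
    rintro r₁ ⟨ha₁, h₁⟩ r₂ ⟨ha₂, h₂⟩
    by_contra hne
    rcases lt_or_gt_of_ne hne with h | h
    exacts [this r₁ r₂ ha₁ h₁ h h₂, this r₂ r₁ ha₂ h₂ h h₁]
  intro r₁ r₂ ha₁ h₁ h₁₂
  have ha₁' : a < r₁ := ha₁.lt_of_ne (by rintro rfl; exact ha.ne h₁)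
  have hlt : f r₁ < f r₂ := hf.lt_right_of_left_lt (mem_Ici.2 le_rfl)
    (mem_Ici.2 (ha₁.trans h₁₂.le))
    (by rw [openSegment_eq_Ioo (ha₁'.trans h₁₂)]; exact ⟨ha₁', h₁₂⟩) (h₁ ▸ ha)
  exact (h₁ ▸ hlt).ne'

theorem ConvexOn.comp_smul_add {E : Type*} [AddCommGroup E] [Module ℝ E] {f : E → ℝ}
    (hf : ConvexOn ℝ univ f) (w z : E) : ConvexOn ℝ univ fun r : ℝ => f (r • w + z) := by
  have hline : (fun r : ℝ => f (r • w + z)) = f ∘ AffineMap.lineMap z (w + z) := by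
    ext r
    simp [AffineMap.lineMap_apply]
  rw [hline, ← preimage_univ]
  exact hf.comp_affineMap _

theorem ContinuousAt.eventually_nonpos_iff {X : Type*} [TopologicalSpace X] {f : X → ℝ}
    {a : X} (hf : ContinuousAt f a) (ha : f a ≠ 0) : ∀ᶠ x in 𝓝 a, (f x ≤ 0 ↔ f a ≤ 0) := by
  rcases ha.lt_or_gt with h | h
  · filter_upwards [hf.eventually (eventually_lt_nhds h)] with x hx
    simp only [hx.le, h.le]
  · filter_upwards [hf.eventually (eventually_gt_nhds h)] with x hx
    simp only [hx.not_ge, h.not_ge]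

theorem tendsto_setIntegral_of_ae_eventually_mem_iff {α ι E : Type*} [MeasurableSpace α]
    [NormedAddCommGroup E] [NormedSpace ℝ E] {μ : Measure α} {l : Filter ι}
    [l.IsCountablyGenerated] {f : α → E} (hf : Integrable f μ) {s : ι → Set α} {t : Set α}
    (hs : ∀ᶠ i in l, MeasurableSet (s i)) (ht : MeasurableSet t)
    (hst : ∀ᵐ a ∂μ, ∀ᶠ i in l, (a ∈ s i ↔ a ∈ t)) :
    Tendsto (fun i => ∫ a in s i, f a ∂μ) l (𝓝 (∫ a in t, f a ∂μ)) := by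
  have hs' : ∀ᶠ i in l, ∫ a in s i, f a ∂μ = ∫ a, (s i).indicator f a ∂μ := by
    filter_upwards [hs] with i hi using (integral_indicator hi).symm
  rw [← integral_indicator ht]
  refine Tendsto.congr' (EventuallyEq.symm hs') ?_
  refine tendsto_integral_filter_of_dominated_convergence (fun a => ‖f a‖) ?_ ?_ hf.norm ?_
  · filter_upwards [hs] with i hi using hf.aestronglyMeasurable.indicator hi
  · exact Eventually.of_forall fun i =>
      Eventually.of_forall fun a => norm_indicator_le_norm_self _ _
  · filter_upwards [hst] with a ha
    refine tendsto_const_nhds.congr' ?_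
    filter_upwards [ha] with i hi
    by_cases hat : a ∈ t <;> simp [hat, hi]

theorem measurableSet_nonneg_sublevel {f : ℝ → ℝ} (hf : Continuous f) :
    MeasurableSet {r | 0 ≤ r ∧ f r ≤ 0} :=
  (measurableSet_le measurable_const measurable_id).inter
    (measurableSet_le hf.measurable measurable_const)

theorem continuousAt_setIntegral_nonneg_sublevel {X E : Type*} [TopologicalSpace X]
    [FirstCountableTopology X] [NormedAddCommGroup E] [NormedSpace ℝ E] {μ : Measure ℝ}
    [NullSingletonClass μ] {f : ℝ → E} (hf : Integrable f μ) {φ : X → ℝ → ℝ}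
    (hφ : Continuous (uncurry φ)) {x₀ : X} (hconv : ConvexOn ℝ (Ici 0) (φ x₀))
    (h0 : φ x₀ 0 < 0) :
    ContinuousAt (fun x => ∫ r in {r | 0 ≤ r ∧ φ x r ≤ 0}, f r ∂μ) x₀ := by
  have hφr : ∀ x, Continuous (φ x) := fun x => hφ.comp (Continuous.prodMk_right x)
  refine tendsto_setIntegral_of_ae_eventually_mem_iff hf
    (Eventually.of_forall fun x => measurableSet_nonneg_sublevel (hφr x))
    (measurableSet_nonneg_sublevel (hφr x₀)) ?_
  have hnull := ((hconv.subsingleton_setOf_eq_of_lt h0).measure_zero μ)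
  filter_upwards [measure_eq_zero_iff_ae_notMem.1 hnull] with r hr
  rcases lt_or_ge r 0 with hr₀ | hr₀
  · exact Eventually.of_forall fun x => by simp [hr₀.not_ge]
  · have hcont : ContinuousAt (fun x => φ x r) x₀ :=
      (hφ.comp (Continuous.prodMk_left r)).continuousAt
    filter_upwards [hcont.eventually_nonpos_iff fun h => hr ⟨hr₀, h⟩] with x hx
    simp only [hx]

theorem integrable_chiPDF (m : ℕ) : Integrable (chiPDF m) := by
  have h := (integrable_rpow_mul_exp_neg_mul_sq (by norm_num : (0:ℝ) < 1 / 2)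
    (neg_one_lt_zero.trans_le (Nat.cast_nonneg (m - 1)))).const_mul
    (2 ^ (1 - (m : ℝ) / 2) / Real.Gamma ((m : ℝ) / 2))
  refine h.congr (Eventually.of_forall fun r => ?_)
  simp only [Real.rpow_natCast, chiPDF]
  ring_nf

theorem radialE_continuousAt_of_uniformSlater_general
    {n m p : ℕ}
    (𝒞 : Set (EuclideanSpace ℝ (Fin p)))
    (z : EuclideanSpace ℝ (Fin p) → EuclideanSpace ℝ (Fin m))
    (L : EuclideanSpace ℝ (Fin p) → Matrix (Fin m) (Fin m) ℝ)
    (g : EuclideanSpace ℝ (Fin n) → EuclideanSpace ℝ (Fin m) → ℝ)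
    (hg : Continuous (Function.uncurry g))
    (hconv : ∀ x, ConvexOn ℝ Set.univ (g x))
    (xbar : EuclideanSpace ℝ (Fin n))
    (hSlater : ∃ U : Set (EuclideanSpace ℝ (Fin n)), IsOpen U ∧ xbar ∈ U ∧
      ∃ γ₀ > 0, ∀ x ∈ U, ∀ c ∈ 𝒞, g x (z c) < -γ₀) :
    ∀ c ∈ 𝒞, ∀ v ∈ Metric.sphere (0 : EuclideanSpace ℝ (Fin m)) 1,
      ContinuousAt (fun x => radialE g z L c x v) xbar := by
  intro c hc v _
  obtain ⟨U, -, hxU, γ₀, hγ₀, hSl⟩ := hSlater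
  have hφ : Continuous fun q : EuclideanSpace ℝ (Fin n) × ℝ =>
      g q.1 (q.2 • mApp (L c) v + z c) :=
    hg.comp (continuous_fst.prodMk ((continuous_snd.smul continuous_const).add continuous_const))
  have h0 : g xbar ((0 : ℝ) • mApp (L c) v + z c) < 0 := by
    rw [zero_smul, zero_add]
    linarith [hSl xbar hxU c hc]
  exact continuousAt_setIntegral_nonneg_sublevel (integrable_chiPDF m) hφ
    (((hconv xbar).comp_smul_add _ _).subset (subset_univ _) (convex_Ici 0)) h0

/-- at a 𝔷-uniform Slater point `x̄`, for every fixed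
`(c, v) ∈ 𝒞 × S^{m-1}`, the function `x ↦ e_c(x, v)` is continuous at `x̄`. -/
theorem radialE_continuousAt_of_uniformSlater
    {n m p : ℕ} (hn : 0 < n) (hm : 0 < m) (hp : 0 < p)
    (𝒞 : Set (EuclideanSpace ℝ (Fin p))) (h𝒞 : MeasurableSet 𝒞)
    (z : EuclideanSpace ℝ (Fin p) → EuclideanSpace ℝ (Fin m))
    (L : EuclideanSpace ℝ (Fin p) → Matrix (Fin m) (Fin m) ℝ)
    (hz : Measurable fun c : 𝒞 => z c)
    (hL : ∀ i j, Measurable fun c : 𝒞 => L c i j)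
    (g : EuclideanSpace ℝ (Fin n) → EuclideanSpace ℝ (Fin m) → ℝ)
    (hg : Continuous (Function.uncurry g))
    (hconv : ∀ x, ConvexOn ℝ Set.univ (g x))
    (xbar : EuclideanSpace ℝ (Fin n))
    (hSlater : ∃ U : Set (EuclideanSpace ℝ (Fin n)), IsOpen U ∧ xbar ∈ U ∧
      ∃ γ₀ > 0, ∀ x ∈ U, ∀ c ∈ 𝒞, g x (z c) < -γ₀) :
    ∀ c ∈ 𝒞, ∀ v ∈ Metric.sphere (0 : EuclideanSpace ℝ (Fin m)) 1,
      ContinuousAt (fun x => radialE g z L c x v) xbar :=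
  radialE_continuousAt_of_uniformSlater_general 𝒞 z L g hg hconv xbar hSlater
end
end

section
/- Suppose x̄ is a 𝔷-uniform Slater point with associated neighborhood U, and let (x, v, c) ∈ U × S^{m−1} × 𝒞 be such that ρ_c(x, v) < ∞. Then the function x' ↦ ρ_c(x', v) is continuously differentiable in a neighborhood of x, with gradient ∇_x ρ_c(x, v) = −∇_x g(x, 𝔷(c) + ρ_c(x,v)·𝔏(c)v) / ⟨∇_z g(x, 𝔷(c) + ρ_c(x,v)·𝔏(c)v), 𝔏(c)v⟩, where ∇_x g and ∇_z g denote the gradients of g with respect to its first and second arguments, and the denominator is strictly positive. -/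
open MeasureTheory Real Set
open scoped InnerProductSpace ENNReal

noncomputable section

/-- The radius function `ρ_c(x, v) ∈ [0, ∞]`,
the supremum of `{r ≥ 0 : g(x, r·𝔏(c)v + 𝔷(c)) ≤ 0}`. -/
def rho {n m p : ℕ} (g : EuclideanSpace ℝ (Fin n) → EuclideanSpace ℝ (Fin m) → ℝ)
    (z : EuclideanSpace ℝ (Fin p) → EuclideanSpace ℝ (Fin m))
    (L : EuclideanSpace ℝ (Fin p) → Matrix (Fin m) (Fin m) ℝ)
    (c : EuclideanSpace ℝ (Fin p)) (x : EuclideanSpace ℝ (Fin n))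
    (v : EuclideanSpace ℝ (Fin m)) : ℝ≥0∞ :=
  sSup (ENNReal.ofReal '' radialSet g z L c x v)

/-!
Along the ray `s ↦ g(x, 𝔷(c) + s • 𝔏(c)v)` the constraint is a convex function of `s` which is
negative at `s = 0` by the Slater condition. Hence a finite radius is a positive root of this
function, the only point where it changes sign, and the derivative there is positive since it
dominates the secant slope from `0`. The implicit function theorem applied to
`(x', s) ↦ g(x', 𝔷(c) + s • 𝔏(c)v)` gives a `C¹` root `r(x')` near `x`; by the same convexity
argument `r(x') = ρ_c(x', v)`, and differentiating the identity `g(x', 𝔷(c) + r(x') • 𝔏(c)v) = 0`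
gives the gradient formula.
-/

open Filter Topology

lemma ConvexOn.comp_add_smul {𝕜 E β : Type*} [Semiring 𝕜] [PartialOrder 𝕜] [AddCommGroup E]
    [Module 𝕜 E] [AddCommMonoid β] [PartialOrder β] [SMul 𝕜 β] {f : E → β}
    (hf : ConvexOn 𝕜 univ f) (a w : E) : ConvexOn 𝕜 univ (fun s : 𝕜 => f (a + s • w)) :=
  (hf.translate_right a).comp_linearMap (LinearMap.toSpanSingleton 𝕜 E w)

lemma ConvexOn.isGreatest_setOf_nonpos {f : ℝ → ℝ} {t : ℝ} (hf : ConvexOn ℝ univ f)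
    (h0 : f 0 < 0) (ht : 0 < t) (hft : f t = 0) : IsGreatest {s | 0 ≤ s ∧ f s ≤ 0} t := by
  refine ⟨⟨ht.le, hft.le⟩, fun s ⟨_, hfs⟩ => ?_⟩
  by_contra! hts
  have := hf.lt_right_of_left_lt (mem_univ 0) (mem_univ s) (Ioo_subset_openSegment ⟨ht, hts⟩)
    (hft ▸ h0)
  linarith

lemma ConvexOn.hasDerivAt_pos {S : Set ℝ} {f : ℝ → ℝ} {a t D : ℝ} (hf : ConvexOn ℝ S f)
    (ha : a ∈ S) (ht : t ∈ S) (hD : HasDerivAt f D t) (hat : a < t) (hfa : f a < f t) : 0 < D :=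
  have := hf.slope_le_of_hasDerivAt ha ht hat hD
  (div_pos (sub_pos.2 hfa) (sub_pos.2 hat)).trans_le (by rwa [slope_def_field] at this)

theorem ContDiffAt.exists_implicitFunction_of_hasDerivAt {𝕜 : Type*} [RCLike 𝕜]
    {E : Type*} [NormedAddCommGroup E] [NormedSpace 𝕜 E] [CompleteSpace E]
    {φ : E × 𝕜 → 𝕜} {x : E} {t D : 𝕜}
    (hφ : ContDiffAt 𝕜 1 φ (x, t)) (hD : HasDerivAt (fun s => φ (x, s)) D t) (hD0 : D ≠ 0) :
    ∃ r : E → 𝕜, ContDiffAt 𝕜 1 r x ∧ r x = t ∧ (∀ᶠ x' in 𝓝 x, φ (x', r x') = φ (x, t)) ∧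
      HasFDerivAt r (-D⁻¹ • fderiv 𝕜 (fun x' => φ (x', t)) x) x := by
  set e : 𝕜 ≃L[𝕜] 𝕜 := ContinuousLinearEquiv.unitsEquivAut 𝕜 (Units.mk0 D hD0)
  have hφ' := (hφ.differentiableAt one_ne_zero).hasFDerivAt
  have hinr : fderiv 𝕜 φ (x, t) ∘L .inr 𝕜 E 𝕜 = e := by
    have := (hφ'.comp t (hasFDerivAt_prodMk_right x t)).hasDerivAt.unique hD
    ext
    simpa [e] using this
  have hinl : fderiv 𝕜 φ (x, t) ∘L .inl 𝕜 E 𝕜 = fderiv 𝕜 (fun x' => φ (x', t)) x :=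
    (hφ'.comp x (hasFDerivAt_prodMk_left x t)).fderiv.symm
  have if₂ : (fderiv 𝕜 φ (x, t) ∘L .inr 𝕜 E 𝕜).IsInvertible := hinr ▸ ⟨e, rfl⟩
  refine ⟨hφ.implicitFunction one_ne_zero if₂, hφ.contDiffAt_implicitFunction one_ne_zero if₂,
    hφ.implicitFunction_apply_self one_ne_zero if₂,
    hφ.eventually_apply_implicitFunction one_ne_zero if₂, ?_⟩
  refine (hφ.hasStrictFDerivAt_implicitFunction one_ne_zero if₂).hasFDerivAt.congr_fderiv ?_
  rw [hinr, hinl, ContinuousLinearMap.inverse_equiv]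
  ext u
  simp [e, mul_comm]

section Radius

variable {n m p : ℕ} {g : EuclideanSpace ℝ (Fin n) → EuclideanSpace ℝ (Fin m) → ℝ}
  {z : EuclideanSpace ℝ (Fin p) → EuclideanSpace ℝ (Fin m)}
  {L : EuclideanSpace ℝ (Fin p) → Matrix (Fin m) (Fin m) ℝ}
  {c : EuclideanSpace ℝ (Fin p)} {x : EuclideanSpace ℝ (Fin n)} {v : EuclideanSpace ℝ (Fin m)}

lemma radialSet_eq :
    radialSet g z L c x v = {s | 0 ≤ s ∧ g x (z c + s • mApp (L c) v) ≤ 0} := by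
  simp only [radialSet, add_comm]

lemma rho_eq_ofReal_of_root (hconv : ConvexOn ℝ univ (g x)) (h0 : g x (z c) < 0) {t : ℝ}
    (ht : 0 < t) (hroot : g x (z c + t • mApp (L c) v) = 0) :
    rho g z L c x v = ENNReal.ofReal t := by
  have := (hconv.comp_add_smul (z c) (mApp (L c) v)).isGreatest_setOf_nonpos (by simpa) ht hroot
  rw [rho, radialSet_eq]
  exact IsGreatest.csSup_eq (ENNReal.ofReal_mono.map_isGreatest this)

lemma exists_root_of_rho_ne_top (hcont : Continuous (g x)) (h0 : g x (z c) < 0)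
    (hfin : rho g z L c x v ≠ ⊤) : ∃ t : ℝ, 0 < t ∧ g x (z c + t • mApp (L c) v) = 0 := by
  obtain ⟨s, hs, hpos⟩ : ∃ s : ℝ, 0 ≤ s ∧ 0 < g x (z c + s • mApp (L c) v) := by
    by_contra! h
    refine hfin <| ENNReal.eq_top_of_forall_nnreal_le fun r =>
      le_sSup ⟨r, ?_, ENNReal.ofReal_coe_nnreal⟩
    rw [radialSet_eq]
    exact ⟨r.2, h r r.2⟩
  obtain ⟨t, ht, hroot⟩ := intermediate_value_Ioo hs
    (hcont.comp (continuous_const.add (continuous_id.smul continuous_const))).continuousOn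
    (show (0 : ℝ) ∈ Ioo _ _ by simpa using ⟨h0, hpos⟩)
  exact ⟨t, ht.1, hroot⟩

end Radius

theorem rho_contDiff_gradient_general
    {n m p : ℕ}
    (𝒞 : Set (EuclideanSpace ℝ (Fin p)))
    (z : EuclideanSpace ℝ (Fin p) → EuclideanSpace ℝ (Fin m))
    (L : EuclideanSpace ℝ (Fin p) → Matrix (Fin m) (Fin m) ℝ)
    (g : EuclideanSpace ℝ (Fin n) → EuclideanSpace ℝ (Fin m) → ℝ)
    (hg : ContDiff ℝ 1 (Function.uncurry g))
    (hconv : ∀ x, ConvexOn ℝ Set.univ (g x))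
    (U : Set (EuclideanSpace ℝ (Fin n))) (hU : IsOpen U)
    (γ₀ : ℝ) (hγ₀ : 0 < γ₀) (hSlater : ∀ x ∈ U, ∀ c ∈ 𝒞, g x (z c) < -γ₀) :
    ∀ x ∈ U, ∀ v ∈ Metric.sphere (0 : EuclideanSpace ℝ (Fin m)) 1, ∀ c ∈ 𝒞,
      rho g z L c x v ≠ ⊤ →
      ∃ W : Set (EuclideanSpace ℝ (Fin n)), IsOpen W ∧ x ∈ W ∧
        ContDiffOn ℝ 1 (fun x' => (rho g z L c x' v).toReal) W ∧
        0 < ⟪gradient (fun z' => g x z') (z c + (rho g z L c x v).toReal • mApp (L c) v), mApp (L c) v⟫_ℝ ∧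
        gradient (fun x' => (rho g z L c x' v).toReal) x =
          (-(⟪gradient (fun z' => g x z') (z c + (rho g z L c x v).toReal • mApp (L c) v),
              mApp (L c) v⟫_ℝ)⁻¹) •
            gradient (fun x' => g x' (z c + (rho g z L c x v).toReal • mApp (L c) v)) x := by
  intro x hx v _ c hc hfin
  have hneg : ∀ x' ∈ U, g x' (z c) < 0 := fun x' hx' => (hSlater x' hx' c hc).trans (by linarith)
  have hgx : ContDiff ℝ 1 (g x) := hg.comp (contDiff_const.prodMk contDiff_id)
  obtain ⟨ρ, hρ, hroot⟩ := exists_root_of_rho_ne_top hgx.continuous (hneg x hx) hfin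
  have hρx : (rho g z L c x v).toReal = ρ := by
    rw [rho_eq_ofReal_of_root (hconv x) (hneg x hx) hρ hroot, ENNReal.toReal_ofReal hρ.le]
  rw [hρx]
  set w := mApp (L c) v
  set φ : EuclideanSpace ℝ (Fin n) × ℝ → ℝ := fun q => g q.1 (z c + q.2 • w)
  have hφ : ContDiff ℝ 1 φ :=
    hg.comp (contDiff_fst.prodMk (contDiff_const.add (contDiff_snd.smul contDiff_const)))
  have hD : HasDerivAt (fun s => φ (x, s)) ⟪gradient (g x) (z c + ρ • w), w⟫_ℝ ρ := by
    have h := (hgx.differentiable one_ne_zero _).hasGradientAt.hasFDerivAt.comp_hasDerivAt ρ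
      (((hasDerivAt_id' ρ).smul_const w).const_add (z c))
    rw [one_smul, InnerProductSpace.toDual_apply_apply] at h
    exact h
  have hDpos : 0 < ⟪gradient (g x) (z c + ρ • w), w⟫_ℝ :=
    ((hconv x).comp_add_smul (z c) w).hasDerivAt_pos (mem_univ 0) (mem_univ ρ) hD hρ
      (by simpa only [zero_smul, add_zero, hroot] using hneg x hx)
  obtain ⟨r, hr, hrx, hrroot, hrderiv⟩ :=
    hφ.contDiffAt.exists_implicitFunction_of_hasDerivAt hD hDpos.ne'
  have hrho : (fun x' => (rho g z L c x' v).toReal) =ᶠ[𝓝 x] r := by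
    filter_upwards [hU.mem_nhds hx, hrroot, hr.continuousAt.eventually (lt_mem_nhds (hrx ▸ hρ))]
      with x' hx' hroot' hpos
    rw [rho_eq_ofReal_of_root (hconv x') (hneg x' hx') hpos (hroot'.trans hroot),
      ENNReal.toReal_ofReal hpos.le]
  obtain ⟨W, hW, hWo, hxW⟩ :=
    eventually_nhds_iff.1 ((hr.congr_of_eventuallyEq hrho).eventually (by simp))
  refine ⟨W, hWo, hxW, fun y hy => (hW y hy).contDiffWithinAt, hDpos, ?_⟩
  refine HasGradientAt.gradient ?_
  rw [hasGradientAt_iff_hasFDerivAt]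
  simpa [gradient] using hrderiv.congr_of_eventuallyEq hrho

/-- on the Slater neighborhood `U`, if `ρ_c(x, v) < ∞`, then
`x' ↦ ρ_c(x', v)` is continuously differentiable near `x`, its gradient at `x`
being `-∇_x g(x, 𝔷(c) + ρ_c(x,v)·𝔏(c)v) / ⟪∇_z g(x, 𝔷(c) + ρ_c(x,v)·𝔏(c)v), 𝔏(c)v⟫`,
with strictly positive denominator. -/
theorem rho_contDiff_gradient
    {n m p : ℕ} (hn : 0 < n) (hm : 0 < m) (hp : 0 < p)
    (𝒞 : Set (EuclideanSpace ℝ (Fin p))) (h𝒞 : MeasurableSet 𝒞)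
    (z : EuclideanSpace ℝ (Fin p) → EuclideanSpace ℝ (Fin m))
    (L : EuclideanSpace ℝ (Fin p) → Matrix (Fin m) (Fin m) ℝ)
    (hz : Measurable fun c : 𝒞 => z c)
    (hL : ∀ i j, Measurable fun c : 𝒞 => L c i j)
    (g : EuclideanSpace ℝ (Fin n) → EuclideanSpace ℝ (Fin m) → ℝ)
    (hg : ContDiff ℝ 1 (Function.uncurry g))
    (hconv : ∀ x, ConvexOn ℝ Set.univ (g x))
    (xbar : EuclideanSpace ℝ (Fin n)) (U : Set (EuclideanSpace ℝ (Fin n))) (hU : IsOpen U) (hxU : xbar ∈ U)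
    (γ₀ : ℝ) (hγ₀ : 0 < γ₀) (hSlater : ∀ x ∈ U, ∀ c ∈ 𝒞, g x (z c) < -γ₀) :
    ∀ x ∈ U, ∀ v ∈ Metric.sphere (0 : EuclideanSpace ℝ (Fin m)) 1, ∀ c ∈ 𝒞,
      rho g z L c x v ≠ ⊤ →
      ∃ W : Set (EuclideanSpace ℝ (Fin n)), IsOpen W ∧ x ∈ W ∧
        ContDiffOn ℝ 1 (fun x' => (rho g z L c x' v).toReal) W ∧
        0 < ⟪gradient (fun z' => g x z') (z c + (rho g z L c x v).toReal • mApp (L c) v), mApp (L c) v⟫_ℝ ∧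
        gradient (fun x' => (rho g z L c x' v).toReal) x =
          (-(⟪gradient (fun z' => g x z') (z c + (rho g z L c x v).toReal • mApp (L c) v),
              mApp (L c) v⟫_ℝ)⁻¹) •
            gradient (fun x' => g x' (z c + (rho g z L c x v).toReal • mApp (L c) v)) x :=
  rho_contDiff_gradient_general 𝒞 z L g hg hconv U hU γ₀ hγ₀ hSlater

end
end
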